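/- Let f(x) = 1/(x-1)^2 over a field k of characteristic 0 and let K_∞ be the union of the splitting fields K_n of f^n(x) - t over K = k(t). Then for every m ≥ 1, K_∞ contains a primitive 2^m-th root of unity; moreover ζ_{2^m} ∈ K_{2m-1}. -/

import Mathlib

open Polynomial

/-- The numerators and denominators of the iterates of `f(x) = 1/(x-1)²` over `k`:
`gh k n = (gₙ, hₙ)` with `g₁ = 1`, `h₁ = (x-1)²`, `gₙ = hₙ₋₁²`, `hₙ = (gₙ₋₁ - hₙ₋₁)²`. -/
noncomputable def gh (k : Type*) [Field k] : ℕ → Polynomial k × Polynomial k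
  | 0 => (1, 1)
  | 1 => (1, (X - 1) ^ 2)
  | n + 2 => ((gh k (n + 1)).2 ^ 2, ((gh k (n + 1)).1 - (gh k (n + 1)).2) ^ 2)

/-- The polynomial `gₙ(x) - t·hₙ(x)` over `K = k(t)`, whose splitting field is `Kₙ`. -/
noncomputable def P (k : Type*) [Field k] (n : ℕ) : Polynomial (RatFunc k) :=
  ((gh k n).1).map (RatFunc.C : k →+* RatFunc k) -
    C RatFunc.X * ((gh k n).2).map (RatFunc.C : k →+* RatFunc k)

/-!
A preimage of `β` under `f(x) = 1/(x-1)²` is `1 + u` with `u² β = 1`, so the fibre of `fʲ⁺²` over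
`β` is the union of the fibres of `fʲ⁺¹` over `1 ± u`; if the fibre of `fⁿ` over `t` splits in `L`,
so do those of the lower iterates over the iterated preimages of `t`. Three generations of preimages
give `u = ((u₁ v v')⁻¹)²` with `u₁² (1 + u) = v² (1 + u₁) = v'² (1 - u₁) = 1`, and recursing into
`u₁, v, v'` makes `u` a `2^((n-1)/2)`-th power in `L`. As `-u` is one too, so is `-1`; for
`n = 2m - 1` its `2^(m-1)`-th root is a primitive `2^m`-th root of unity.
-/

section

variable {k : Type*} [Field k]

theorem isCoprime_gh (j : ℕ) : IsCoprime (gh k (j + 1)).1 (gh k (j + 1)).2 := by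
  induction j with
  | zero => simp [gh, isCoprime_one_left]
  | succ n ih =>
    have h : IsCoprime (gh k (n + 1)).2 ((gh k (n + 1)).1 - (gh k (n + 1)).2) := by
      simpa [sub_eq_add_neg] using ih.symm.add_mul_left_right (-1)
    simpa [gh] using h.pow

/-- `f` permutes `{0, 1, ∞}` cyclically (`1 ↦ ∞ ↦ 0 ↦ 1`), so `fʲ(0) ≠ fʲ(1)`. -/
theorem gh_eval_zero_ne_eval_one (j : ℕ) :
    ((gh k (j + 1)).1.eval 0, (gh k (j + 1)).2.eval 0) ≠
      ((gh k (j + 1)).1.eval 1, (gh k (j + 1)).2.eval 1) := by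
  have cycle : ∀ j : ℕ,
      let e := fun x : k => ((gh k (j + 1)).1.eval x, (gh k (j + 1)).2.eval x)
      (e 1 = (1, 0) ∧ e 0 = (1, 1)) ∨ (e 1 = (0, 1) ∧ e 0 = (1, 0)) ∨
        (e 1 = (1, 1) ∧ e 0 = (0, 1)) := by
    intro j
    induction j with
    | zero => simp [gh]
    | succ n ih =>
      simp only [Prod.mk.injEq] at ih ⊢
      rcases ih with ⟨⟨a, b⟩, c, d⟩ | ⟨⟨a, b⟩, c, d⟩ | ⟨⟨a, b⟩, c, d⟩ <;> simp [gh, a, b, c, d]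
  rcases cycle j with ⟨h1, h0⟩ | ⟨h1, h0⟩ | ⟨h1, h0⟩ <;> simp [h1, h0]

variable (k) {L : Type*} [Field L] [Algebra k L]

noncomputable def fiberPoly (j : ℕ) (β : L) : L[X] :=
  (gh k j).1.map (algebraMap k L) - C β * (gh k j).2.map (algebraMap k L)

def SplitFiber (j : ℕ) (β : L) : Prop :=
  β ∉ Set.range (algebraMap k L) ∧ (fiberPoly k j β).Splits

variable {k}

theorem degree_fiberPoly_pos {β : L} (hβ : β ∉ Set.range (algebraMap k L)) (j : ℕ) :
    0 < (fiberPoly k (j + 1) β).degree := by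
  by_contra hdeg
  have hconst := eq_C_of_degree_le_zero (not_lt.mp hdeg)
  have heval : (fiberPoly k (j + 1) β).eval 0 = (fiberPoly k (j + 1) β).eval 1 := by
    rw [hconst]; simp
  simp only [fiberPoly, eval_sub, eval_mul, eval_C, eval_zero_map, eval_one_map] at heval
  set g := (gh k (j + 1)).1
  set h := (gh k (j + 1)).2
  by_cases hh : h.eval 0 = h.eval 1
  · have hg : g.eval 0 = g.eval 1 :=
      (algebraMap k L).injective (by linear_combination heval + β * congrArg (algebraMap k L) hh)
    exact gh_eval_zero_ne_eval_one j (Prod.ext hg hh)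
  · refine hβ ⟨(g.eval 0 - g.eval 1) / (h.eval 0 - h.eval 1), ?_⟩
    have hne : algebraMap k L (h.eval 0 - h.eval 1) ≠ 0 := by simpa [sub_eq_zero] using hh
    rw [map_div₀, div_eq_iff hne, map_sub, map_sub]
    linear_combination heval

/-- The fibre of `fʲ⁺²` over `β` is the union of the fibres of `fʲ⁺¹` over the preimages
`1 ± u` of `β`. -/
theorem fiberPoly_add_two {β u : L} (hu : u ^ 2 * β = 1) (j : ℕ) :
    fiberPoly k (j + 2) β =
      C (-β) * (fiberPoly k (j + 1) (1 + u) * fiberPoly k (j + 1) (1 - u)) := by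
  have hC : C u ^ 2 * C β = 1 := by rw [← C_pow, ← C_mul, hu, C_1]
  simp only [fiberPoly, gh, Polynomial.map_pow, Polynomial.map_sub, C_add, C_sub, C_neg, C_1]
  linear_combination (-((gh k (j + 1)).2.map (algebraMap k L)) ^ 2) * hC

theorem SplitFiber.one_add {j : ℕ} {β u : L} (h : SplitFiber k (j + 2) β) (hu : u ^ 2 * β = 1) :
    SplitFiber k (j + 1) (1 + u) := by
  obtain ⟨hβ, hsplit⟩ := h
  refine ⟨?_, hsplit.of_dvd (ne_zero_of_degree_gt (degree_fiberPoly_pos hβ (j + 1))) ?_⟩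
  · rintro ⟨a, ha⟩
    have hu' : u = algebraMap k L (a - 1) := by rw [map_sub, map_one, ha]; ring
    refine hβ ⟨((a - 1) ^ 2)⁻¹, ?_⟩
    rw [map_inv₀, map_pow, ← hu']
    exact inv_eq_of_mul_eq_one_right hu
  · rw [fiberPoly_add_two hu]
    exact ⟨C (-β) * fiberPoly k (j + 1) (1 - u), by ring⟩

theorem SplitFiber.one_sub {j : ℕ} {β u : L} (h : SplitFiber k (j + 2) β) (hu : u ^ 2 * β = 1) :
    SplitFiber k (j + 1) (1 - u) := by
  simpa [sub_eq_add_neg] using h.one_add (u := -u) (by rwa [neg_sq])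

theorem SplitFiber.exists_sq_mul_eq_one {j : ℕ} {β : L} (h : SplitFiber k (j + 1) β) :
    ∃ u : L, u ^ 2 * β = 1 := by
  obtain ⟨γ, hγ⟩ := h.2.exists_eval_eq_zero (degree_fiberPoly_pos h.1 j).ne'
  cases j with
  | zero =>
    refine ⟨γ - 1, ?_⟩
    simp [fiberPoly, gh] at hγ
    linear_combination -hγ
  | succ j =>
    simp only [fiberPoly, gh, Polynomial.map_pow, Polynomial.map_sub, eval_sub, eval_mul, eval_C,
      eval_pow] at hγ
    -- `fʲ⁺¹(γ) = G / H` is a preimage of `β`; coprimality rules out `H = 0`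
    set G := ((gh k (j + 1)).1.map (algebraMap k L)).eval γ
    set H := ((gh k (j + 1)).2.map (algebraMap k L)).eval γ
    have hβ0 : β ≠ 0 := by rintro rfl; exact h.1 ⟨0, map_zero _⟩
    have hH : H ≠ 0 := by
      intro hH
      have hG : G = 0 := by
        rw [hH] at hγ
        simpa [hβ0] using hγ
      obtain ⟨a, b, hab⟩ := isCoprime_gh (k := k) j
      have hone :
          (a.map (algebraMap k L)).eval γ * G + (b.map (algebraMap k L)).eval γ * H = 1 := by
        simpa only [Polynomial.map_add, Polynomial.map_mul, Polynomial.map_one, eval_add, eval_mul,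
          eval_one] using congrArg (fun p => (p.map (algebraMap k L)).eval γ) hab
      simp [hG, hH] at hone
    exact ⟨(G - H) / H, by field_simp; linear_combination -hγ⟩

/-- With `α = 1 + u` and `αᵢ = 1 + uᵢ`, this is `α - 1 = [1/((α₁-1)(α₁₁-1)(α₂₁-1))]²`. -/
theorem sq_mul_eq_one_of_preimages {R : Type*} [CommRing R] {u u₁ v v' : R}
    (hu₁ : u₁ ^ 2 * (1 + u) = 1) (hv : v ^ 2 * (1 + u₁) = 1) (hv' : v' ^ 2 * (1 - u₁) = 1) :
    (u₁ * v * v') ^ 2 * u = 1 := by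
  linear_combination (v ^ 2 * v' ^ 2) * hu₁ + (v' ^ 2 * (1 - u₁)) * hv + hv'

theorem exists_pow_two_pow_eq_of_le {M : Type*} [Monoid M] {x z : M} {e e' : ℕ}
    (hz : z ^ 2 ^ e' = x) (he : e ≤ e') : ∃ y : M, y ^ 2 ^ e = x :=
  ⟨z ^ 2 ^ (e' - e), by rw [← pow_mul, ← pow_add, Nat.sub_add_cancel he, hz]⟩

theorem SplitFiber.exists_pow_two_pow_eq {n : ℕ} {β u : L} (h : SplitFiber k n β)
    (hu : u ^ 2 * β = 1) : ∃ z : L, z ^ 2 ^ ((n - 1) / 2) = u := by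
  induction n using Nat.strong_induction_on generalizing β u with
  | _ n ih =>
    obtain hn | ⟨m, rfl⟩ : n < 3 ∨ ∃ m, n = m + 3 := by
      rcases Nat.lt_or_ge n 3 with hn | hn
      exacts [.inl hn, .inr ⟨n - 3, by omega⟩]
    · exact ⟨u, by rw [show (n - 1) / 2 = 0 by omega, pow_zero, pow_one]⟩
    have h₁ : SplitFiber k (m + 2) (1 + u) := h.one_add hu
    obtain ⟨u₁, hu₁⟩ := h₁.exists_sq_mul_eq_one
    obtain ⟨v, hv⟩ := (h₁.one_add hu₁).exists_sq_mul_eq_one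
    obtain ⟨v', hv'⟩ := (h₁.one_sub hu₁).exists_sq_mul_eq_one
    obtain ⟨a, ha⟩ := ih (m + 2) (by omega) h₁ hu₁
    obtain ⟨a, ha⟩ := exists_pow_two_pow_eq_of_le ha (e := m / 2) (by omega)
    obtain ⟨b, hb⟩ := ih (m + 1) (by omega) (h₁.one_add hu₁) hv
    obtain ⟨c, hc⟩ := ih (m + 1) (by omega) (h₁.one_sub hu₁) hv'
    rw [Nat.add_sub_cancel] at hb hc
    refine ⟨(a * b * c)⁻¹, ?_⟩
    rw [show (m + 3 - 1) / 2 = m / 2 + 1 by omega, pow_succ, pow_mul, inv_pow, mul_pow, mul_pow,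
      ha, hb, hc, inv_pow]
    exact inv_eq_of_mul_eq_one_right (sq_mul_eq_one_of_preimages hu₁ hv hv')

theorem isPrimitiveRoot_of_pow_two_pow_eq_neg_one {R : Type*} [CommRing R] [NeZero (2 : R)]
    {ζ : R} {j : ℕ} (h : ζ ^ 2 ^ j = -1) : IsPrimitiveRoot ζ (2 ^ (j + 1)) := by
  have hne : (-1 : R) ≠ 1 := by
    intro h1
    exact two_ne_zero (α := R) (by linear_combination -h1)
  rw [IsPrimitiveRoot.iff_orderOf]
  refine orderOf_eq_prime_pow (by rwa [h]) ?_
  rw [pow_succ, pow_mul, h, neg_one_sq]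

theorem SplitFiber.exists_isPrimitiveRoot [NeZero (2 : L)] {j : ℕ} {β : L}
    (h : SplitFiber k (2 * j + 1) β) : ∃ ζ : L, IsPrimitiveRoot ζ (2 ^ (j + 1)) := by
  obtain ⟨u, hu⟩ := h.exists_sq_mul_eq_one
  have hu0 : u ≠ 0 := by rintro rfl; simp at hu
  obtain ⟨a, ha⟩ := h.exists_pow_two_pow_eq hu
  obtain ⟨b, hb⟩ := h.exists_pow_two_pow_eq (u := -u) (by rwa [neg_sq])
  simp only [Nat.add_sub_cancel, Nat.mul_div_cancel_left _ two_pos] at ha hb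
  refine ⟨b / a, isPrimitiveRoot_of_pow_two_pow_eq_neg_one ?_⟩
  rw [div_pow, ha, hb, neg_div, div_self hu0]

variable [Algebra (RatFunc k) L] [IsScalarTower k (RatFunc k) L]

theorem map_P (n : ℕ) :
    (P k n).map (algebraMap (RatFunc k) L) =
      fiberPoly k n (algebraMap (RatFunc k) L RatFunc.X) := by
  simp only [P, fiberPoly, Polynomial.map_sub, Polynomial.map_mul, map_C, Polynomial.map_map,
    ← RatFunc.algebraMap_eq_C, ← IsScalarTower.algebraMap_eq]

theorem splitFiber_algebraMap_X {n : ℕ} (h : ((P k n).map (algebraMap (RatFunc k) L)).Splits) :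
    SplitFiber k n (algebraMap (RatFunc k) L RatFunc.X) := by
  refine ⟨?_, by rwa [← map_P]⟩
  rintro ⟨a, ha⟩
  rw [IsScalarTower.algebraMap_apply k (RatFunc k)] at ha
  have := congrArg RatFunc.intDegree ((algebraMap (RatFunc k) L).injective ha)
  simp [RatFunc.algebraMap_eq_C] at this

end

/-- For `f(x) = 1/(x-1)²` over a field `k` of characteristic zero,
the field `K_∞ = ⋃ₙ Kₙ` (where `Kₙ` is the splitting field of `fⁿ(x) - t` over
`K = k(t)`) contains a primitive `2^m`-th root of unity for every `m ≥ 1`;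
moreover `ζ_{2^m} ∈ K_{2m-1}`. -/
theorem roots_of_unity_in_Kinfty (k : Type) [Field k] [CharZero k] :
    (∀ m : ℕ, 1 ≤ m → ∃ n : ℕ, ∃ ζ : (P k n).SplittingField, IsPrimitiveRoot ζ (2 ^ m)) ∧
    (∀ m : ℕ, 1 ≤ m → ∃ ζ : (P k (2 * m - 1)).SplittingField, IsPrimitiveRoot ζ (2 ^ m)) := by
  have key : ∀ m : ℕ, 1 ≤ m →
      ∃ ζ : (P k (2 * m - 1)).SplittingField, IsPrimitiveRoot ζ (2 ^ m) := by
    intro m hm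
    obtain ⟨j, rfl⟩ : ∃ j, m = j + 1 := ⟨m - 1, by omega⟩
    have : CharZero (P k (2 * (j + 1) - 1)).SplittingField :=
      charZero_of_injective_algebraMap (algebraMap k _).injective
    have ht := splitFiber_algebraMap_X (SplittingField.splits (P k (2 * (j + 1) - 1)))
    rw [show 2 * (j + 1) - 1 = 2 * j + 1 by omega] at ht ⊢
    exact ht.exists_isPrimitiveRoot
  exact ⟨fun m hm => ⟨2 * m - 1, key m hm⟩, key⟩
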